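/- Let μ be a directed metric on a nonempty finite set S, let V be a set with S ⊆ V, and let d be a directed metric on V. Then d is congruent to some cyclically tight extension of μ on V if and only if there exists a map ρ : V → Q_μ with D_∞(ρ(x), ρ(y)) = d(x,y) for all x,y ∈ V, ρ(s) − μ_s ∈ ℝe for all s ∈ S, and ρ(V) balanced, where e ∈ ℝ^{S^{cr}} has e^c ≡ 1 and e^r ≡ −1. -/
import Mathlib


open scoped BigOperators

/-- Points of `ℝ^{S^{cr}}`: pairs `p = (p^c, p^r)` of functions `S → ℝ`,
with the componentwise partial order (the product/pi order). -/
abbrev Pt (S : Type*) := (S → ℝ) × (S → ℝ)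

/-- `μ` is a directed distance: nonnegative with zero diagonal. -/
def DirDist {S : Type*} (μ : S → S → ℝ) : Prop :=
  (∀ s t, 0 ≤ μ s t) ∧ (∀ s, μ s s = 0)

/-- `d` is a directed metric: a directed distance satisfying the triangle inequality. -/
def DirMetric {V : Type*} (d : V → V → ℝ) : Prop :=
  DirDist d ∧ ∀ x y z, d x z ≤ d x y + d y z

/-- The polyhedron `Π_μ`. -/
def PiP {S : Type*} (μ : S → S → ℝ) : Set (Pt S) :=
  {p | ∀ s t, μ s t ≤ p.1 s + p.2 t}

/-- The polyhedron `P_μ = Π_μ ∩ ℝ_+^{S^{cr}}`. -/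
def PP {S : Type*} (μ : S → S → ℝ) : Set (Pt S) :=
  {p ∈ PiP μ | 0 ≤ p}

/-- The directed tight span `T_μ`: minimal elements of `P_μ`. -/
def TT {S : Type*} (μ : S → S → ℝ) : Set (Pt S) :=
  {p ∈ PP μ | ∀ q ∈ PP μ, q ≤ p → q = p}

/-- `Q_μ`: minimal elements of `Π_μ`. -/
def QQ {S : Type*} (μ : S → S → ℝ) : Set (Pt S) :=
  {p ∈ PiP μ | ∀ q ∈ PiP μ, q ≤ p → q = p}

/-- `Q_μ^+ = Q_μ ∩ ℝ_+^{S^{cr}}`. -/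
def QP {S : Type*} (μ : S → S → ℝ) : Set (Pt S) :=
  QQ μ ∩ {p | 0 ≤ p}

/-- `D_∞^+(f,g) = max_x (g(x) - f(x))_+`. -/
noncomputable def Dplus {X : Type*} [Fintype X] (f g : X → ℝ) : ℝ :=
  ⨆ x, max (g x - f x) 0

/-- `D_∞(p,q) = max ( D_∞^+(p^c,q^c), D_∞^+(q^r,p^r) )`. -/
noncomputable def Dinf {S : Type*} [Fintype S] (p q : Pt S) : ℝ :=
  max (Dplus p.1 q.1) (Dplus q.2 p.2)

/-- A subset `R` is balanced if no pair `p, q ∈ R` satisfies `p^c < q^c`,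
and no pair satisfies `p^r < q^r`. -/
def BalancedSet {S : Type*} (R : Set (Pt S)) : Prop :=
  (¬ ∃ p ∈ R, ∃ q ∈ R, ∀ s, p.1 s < q.1 s) ∧
  (¬ ∃ p ∈ R, ∃ q ∈ R, ∀ s, p.2 s < q.2 s)

/-- The vector `e = (1, -1)` spanning the linearity space of `Π_μ`. -/
def eVec (S : Type*) : Pt S := (fun _ => 1, fun _ => -1)

/-- `R ⊆ Q_μ` is a section: every point of `Q_μ` differs from exactly one point
of `R` by a multiple of `e`. -/
def IsSection {S : Type*} (μ : S → S → ℝ) (R : Set (Pt S)) : Prop :=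
  R ⊆ QQ μ ∧ ∀ q ∈ QQ μ, ∃! p, p ∈ R ∧ ∃ α : ℝ, q - p = α • eVec S

/-- The length of the cycle `(x 0, x 1, …, x m)` with respect to `d`. -/
def cycLen {V : Type*} (d : V → V → ℝ) (m : ℕ) (x : Fin (m + 1) → V) : ℝ :=
  ∑ i, d (x i) (x (i + 1))


/-- The canonical point `μ_s` of `ℝ^{S^{cr}}`. -/
def muVec {S : Type*} (μ : S → S → ℝ) (s : S) : Pt S :=
  (fun t => μ t s, fun t => μ s t)

/-- `(V,d)` is a cyclically tight extension of `(S,μ)`. -/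
def IsCycTightExt {V : Type*} (S : Set V) (μ : S → S → ℝ) (d : V → V → ℝ) : Prop :=
  DirMetric d ∧ (∀ s t : S, d s t = μ s t) ∧
  ¬ ∃ d' : V → V → ℝ, DirMetric d' ∧ (∀ s t : S, d' s t = μ s t) ∧
      (∀ (m : ℕ) (x : Fin (m + 1) → V), cycLen d' m x ≤ cycLen d m x) ∧
      (∃ (m : ℕ) (x : Fin (m + 1) → V), cycLen d' m x < cycLen d m x)

section AuxStmt15
set_option linter.unusedSectionVars false

variable {σ : Type*} [Fintype σ] [Nonempty σ]

lemma le_csup15 (f : σ → ℝ) (s : σ) : f s ≤ ⨆ s, f s :=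
  le_ciSup (Set.Finite.bddAbove (Set.finite_range f)) s

lemma csup_attain15 (f : σ → ℝ) : ∃ s, (⨆ i, f i) = f s := by
  obtain ⟨s, hs⟩ := Finite.exists_max f
  exact ⟨s, le_antisymm (ciSup_le hs) (le_csup15 f s)⟩

lemma csup_add (f : σ → ℝ) (c : ℝ) : (⨆ s, (f s + c)) = (⨆ s, f s) + c := by
  obtain ⟨s, hs⟩ := csup_attain15 f
  refine le_antisymm (ciSup_le fun t => by have := le_csup15 f t; linarith) ?_
  rw [hs]
  exact le_csup15 (fun s => f s + c) s

/-- `δ^c(p,q) = max_s (q^c s - p^c s)` (no clipping). -/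
noncomputable def delC (p q : Pt σ) : ℝ := ⨆ s, (q.1 s - p.1 s)
/-- `δ^r(p,q) = max_s (p^r s - q^r s)` (no clipping). -/
noncomputable def delR (p q : Pt σ) : ℝ := ⨆ s, (p.2 s - q.2 s)

lemma delC_le {p q : Pt σ} {a : ℝ} (h : ∀ s, q.1 s - p.1 s ≤ a) : delC p q ≤ a := ciSup_le h
lemma le_delC (p q : Pt σ) (s : σ) : q.1 s - p.1 s ≤ delC p q := le_csup15 (fun s => q.1 s - p.1 s) s
lemma delR_le {p q : Pt σ} {a : ℝ} (h : ∀ s, p.2 s - q.2 s ≤ a) : delR p q ≤ a := ciSup_le h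
lemma le_delR (p q : Pt σ) (s : σ) : p.2 s - q.2 s ≤ delR p q := le_csup15 (fun s => p.2 s - q.2 s) s

lemma delC_self (p : Pt σ) : delC p p = 0 := by
  refine le_antisymm (delC_le fun s => by simp) ?_
  have := le_delC p p (Classical.arbitrary σ); linarith [this]

lemma delC_triangle (p q r : Pt σ) : delC p r ≤ delC p q + delC q r := by
  refine delC_le fun s => ?_
  have h1 := le_delC p q s
  have h2 := le_delC q r s
  linarith

lemma Dplus_eq (f g : σ → ℝ) : Dplus f g = max (⨆ x, (g x - f x)) 0 := by
  refine le_antisymm (ciSup_le fun s => ?_) (max_le ?_ ?_)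
  · exact max_le (le_trans (le_csup15 (fun x => g x - f x) s) (le_max_left _ _)) (le_max_right _ _)
  · exact ciSup_le fun s => le_trans (le_max_left _ _) (le_csup15 (fun x => max (g x - f x) 0) s)
  · exact le_trans (le_max_right _ _) (le_csup15 (fun x => max (g x - f x) 0) (Classical.arbitrary σ))

lemma Dinf_eq (p q : Pt σ) : Dinf p q = max (max (delC p q) (delR p q)) 0 := by
  rw [Dinf, Dplus_eq, Dplus_eq, delC, delR, max_max_max_comm, max_self]

lemma mem_PiP15 {μ : σ → σ → ℝ} {p : Pt σ} : p ∈ PiP μ ↔ ∀ s t, μ s t ≤ p.1 s + p.2 t := Iff.rfl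

/-- characterization of Q_μ -/
lemma mem_QQ_iff {μ : σ → σ → ℝ} {p : Pt σ} :
    p ∈ QQ μ ↔ p ∈ PiP μ ∧ (∀ s, ∃ t, p.1 s = μ s t - p.2 t) ∧
      (∀ t, ∃ s, p.2 t = μ s t - p.1 s) := by
  classical
  constructor
  · rintro ⟨hPi, hmin⟩
    refine ⟨hPi, fun s0 => ?_, fun t0 => ?_⟩
    · set m : ℝ := ⨆ t, (μ s0 t - p.2 t) with hm
      have hmle : m ≤ p.1 s0 := ciSup_le fun t => by have := hPi s0 t; linarith
      set q : Pt σ := (Function.update p.1 s0 m, p.2) with hq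
      have hqPi : q ∈ PiP μ := by
        intro s t
        by_cases h : s = s0
        · subst h
          simp only [hq, Function.update_self]
          have : μ s t - p.2 t ≤ m := le_csup15 (fun t => μ s t - p.2 t) t
          linarith
        · simpa [hq, Function.update_of_ne h] using hPi s t
      have hqle : q ≤ p := by
        refine ⟨fun s => ?_, le_refl _⟩
        by_cases h : s = s0
        · subst h; simpa [hq] using hmle
        · simp [hq, Function.update_of_ne h]
      have := hmin q hqPi hqle
      have h1 : m = p.1 s0 := by
        have := congrArg (fun r : Pt σ => r.1 s0) this
        simpa [hq] using this
      obtain ⟨t, ht⟩ := csup_attain15 (fun t => μ s0 t - p.2 t)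
      exact ⟨t, by rw [← h1, hm, ht]⟩
    · set m : ℝ := ⨆ s, (μ s t0 - p.1 s) with hm
      have hmle : m ≤ p.2 t0 := ciSup_le fun s => by have := hPi s t0; linarith
      set q : Pt σ := (p.1, Function.update p.2 t0 m) with hq
      have hqPi : q ∈ PiP μ := by
        intro s t
        by_cases h : t = t0
        · subst h
          simp only [hq, Function.update_self]
          have : μ s t - p.1 s ≤ m := le_csup15 (fun s => μ s t - p.1 s) s
          linarith
        · simpa [hq, Function.update_of_ne h] using hPi s t
      have hqle : q ≤ p := by
        refine ⟨le_refl _, fun t => ?_⟩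
        by_cases h : t = t0
        · subst h; simpa [hq] using hmle
        · simp [hq, Function.update_of_ne h]
      have := hmin q hqPi hqle
      have h1 : m = p.2 t0 := by
        have := congrArg (fun r : Pt σ => r.2 t0) this
        simpa [hq] using this
      obtain ⟨s, hs⟩ := csup_attain15 (fun s => μ s t0 - p.1 s)
      exact ⟨s, by rw [← h1, hm, hs]⟩
  · rintro ⟨hPi, h1, h2⟩
    refine ⟨hPi, fun q hqPi hqle => ?_⟩
    have hc : ∀ s, q.1 s = p.1 s := by
      intro s
      obtain ⟨t, ht⟩ := h1 s
      have : μ s t - q.2 t ≤ q.1 s := by have := hqPi s t; linarith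
      have h2' : q.2 t ≤ p.2 t := hqle.2 t
      have h3' : q.1 s ≤ p.1 s := hqle.1 s
      have : p.1 s ≤ q.1 s := by rw [ht]; linarith
      linarith
    have hr : ∀ t, q.2 t = p.2 t := by
      intro t
      obtain ⟨s, hs⟩ := h2 t
      have : μ s t - q.1 s ≤ q.2 t := by have := hqPi s t; linarith
      have h2' : q.1 s ≤ p.1 s := hqle.1 s
      have h3' : q.2 t ≤ p.2 t := hqle.2 t
      have : p.2 t ≤ q.2 t := by rw [hs]; linarith
      linarith
    exact Prod.ext (funext hc) (funext hr)

/-- e-shift of a point. -/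
def shiftPt (p : Pt σ) (a : ℝ) : Pt σ := (fun s => p.1 s + a, fun s => p.2 s - a)

lemma shiftPt_mem_QQ {μ : σ → σ → ℝ} {p : Pt σ} (hp : p ∈ QQ μ) (a : ℝ) :
    shiftPt p a ∈ QQ μ := by
  rw [mem_QQ_iff] at hp ⊢
  obtain ⟨hPi, h1, h2⟩ := hp
  refine ⟨fun s t => by have := hPi s t; simp [shiftPt]; linarith, fun s => ?_, fun t => ?_⟩
  · obtain ⟨t, ht⟩ := h1 s; exact ⟨t, by simp [shiftPt]; linarith⟩
  · obtain ⟨s, hs⟩ := h2 t; exact ⟨s, by simp [shiftPt]; linarith⟩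

lemma delC_shiftPt (p q : Pt σ) (a b : ℝ) :
    delC (shiftPt p a) (shiftPt q b) = delC p q + (b - a) := by
  have h : (fun s => (shiftPt q b).1 s - (shiftPt p a).1 s) = fun s => (q.1 s - p.1 s) + (b - a) := by
    funext s; simp [shiftPt]; ring
  rw [delC, h, csup_add]
  rfl

lemma delC_eq_delR {μ : σ → σ → ℝ} {p q : Pt σ} (hp : p ∈ QQ μ) (hq : q ∈ QQ μ) :
    delC p q = delR p q := by
  rw [mem_QQ_iff] at hp hq
  refine le_antisymm ?_ ?_
  · obtain ⟨s, hs⟩ := csup_attain15 (fun s => q.1 s - p.1 s)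
    obtain ⟨t, ht⟩ := hq.2.1 s
    have hPi := hp.1 s t
    have := le_delR p q t
    rw [delC, hs, ht]
    linarith
  · obtain ⟨t, ht⟩ := csup_attain15 (fun t => p.2 t - q.2 t)
    obtain ⟨s, hs⟩ := hp.2.2 t
    have hPi := hq.1 s t
    have := le_delC p q s
    rw [delR, ht, hs]
    linarith

lemma Dinf_eq_QQ {μ : σ → σ → ℝ} {p q : Pt σ} (hp : p ∈ QQ μ) (hq : q ∈ QQ μ) :
    Dinf p q = max (delC p q) 0 := by
  rw [Dinf_eq, ← delC_eq_delR hp hq, max_self]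

lemma muVec_mem_QQ {μ : σ → σ → ℝ} (hμ : DirMetric μ)
    (s : σ) : muVec μ s ∈ QQ μ := by
  rw [mem_QQ_iff]
  refine ⟨fun u v => ?_, fun u => ⟨s, ?_⟩, fun v => ⟨s, ?_⟩⟩
  · exact hμ.2 u s v
  · simp [muVec, hμ.1.2 s]
  · simp [muVec, hμ.1.2 s]

lemma delC_muVec {μ : σ → σ → ℝ} (hμ : DirMetric μ)
    (s t : σ) : delC (muVec μ s) (muVec μ t) = μ s t := by
  refine le_antisymm (delC_le fun u => by have := hμ.2 u s t; simp [muVec]; linarith) ?_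
  have := le_delC (muVec μ s) (muVec μ t) s
  simp [muVec, hμ.1.2 s] at this
  exact this


lemma shiftPt_sub (p : Pt σ) (a : ℝ) : shiftPt p a - p = a • eVec σ := by
  refine Prod.ext ?_ ?_ <;> funext s <;> simp [shiftPt, eVec] <;> ring

/-- key domination lemma: a point of `Π_μ` dominated coordinate-sum-wise by a
minimal point equals an `e`-shift of it. -/
lemma dominated_eq_shift {μ : σ → σ → ℝ} {p : Pt σ} (hp : p ∈ QQ μ)
    {a b : σ → ℝ} (hab : (a, b) ∈ PiP μ)
    (h : ∀ s t, a s + b t ≤ p.1 s + p.2 t) :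
    ∃ β : ℝ, (∀ s, a s = p.1 s + β) ∧ (∀ s, b s = p.2 s - β) := by
  set β : ℝ := ⨆ s, (a s - p.1 s) with hβ
  have h1 : ∀ s, a s ≤ p.1 s + β := fun s => by
    have := le_csup15 (fun s => a s - p.1 s) s; rw [← hβ] at this; linarith
  have h2 : ∀ t, b t ≤ p.2 t - β := by
    intro t
    have : β ≤ p.2 t - b t := ciSup_le fun s => by have := h s t; linarith
    linarith
  have hq : shiftPt p β ∈ QQ μ := shiftPt_mem_QQ hp β
  have hle : (a, b) ≤ shiftPt p β := ⟨fun s => h1 s, fun t => by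
    have := h2 t; simpa [shiftPt] using this⟩
  have heq := hq.2 (a, b) hab hle
  refine ⟨β, fun s => ?_, fun t => ?_⟩
  · have := congrArg (fun r : Pt σ => r.1 s) heq; simpa [shiftPt] using this
  · have := congrArg (fun r : Pt σ => r.2 t) heq; simpa [shiftPt] using this

/-- reduction of a point of `Π_μ` to a minimal point below it -/
noncomputable def redR (μ : σ → σ → ℝ) (p : Pt σ) (t : σ) : ℝ := ⨆ s, (μ s t - p.1 s)
noncomputable def redC (μ : σ → σ → ℝ) (p : Pt σ) (s : σ) : ℝ := ⨆ t, (μ s t - redR μ p t)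
noncomputable def red (μ : σ → σ → ℝ) (p : Pt σ) : Pt σ := (redC μ p, redR μ p)

lemma redR_le {μ : σ → σ → ℝ} {p : Pt σ} (hp : p ∈ PiP μ) (t : σ) :
    redR μ p t ≤ p.2 t :=
  ciSup_le fun s => by have := hp s t; linarith

lemma redC_le {μ : σ → σ → ℝ} (p : Pt σ) (s : σ) : redC μ p s ≤ p.1 s := by
  refine ciSup_le fun t => ?_
  have : μ s t - p.1 s ≤ redR μ p t := le_csup15 (fun s => μ s t - p.1 s) s
  linarith

lemma red_le {μ : σ → σ → ℝ} {p : Pt σ} (hp : p ∈ PiP μ) : red μ p ≤ p :=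
  ⟨fun s => redC_le p s, fun t => redR_le hp t⟩

lemma red_mem_QQ {μ : σ → σ → ℝ} {p : Pt σ} (hp : p ∈ PiP μ) : red μ p ∈ QQ μ := by
  rw [mem_QQ_iff]
  refine ⟨fun s t => ?_, fun s => ?_, fun t => ?_⟩
  · have : μ s t - redR μ p t ≤ redC μ p s := le_csup15 (fun t => μ s t - redR μ p t) t
    simp only [red]; linarith
  · obtain ⟨t, ht⟩ := csup_attain15 (fun t => μ s t - redR μ p t)
    exact ⟨t, by simp only [red, redC, ht]⟩
  · obtain ⟨s, hs⟩ := csup_attain15 (fun s => μ s t - p.1 s)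
    refine ⟨s, ?_⟩
    have hub : μ s t - redC μ p s ≤ redR μ p t := by
      have : μ s t - redR μ p t ≤ redC μ p s := le_csup15 (fun t => μ s t - redR μ p t) t
      linarith
    have hlb : redR μ p t ≤ μ s t - redC μ p s := by
      have h1 : redC μ p s ≤ p.1 s := redC_le p s
      have : redR μ p t = μ s t - p.1 s := by simp only [redR, hs]
      rw [this]; linarith
    simp only [red]
    linarith

lemma cinf_le15 (f : σ → ℝ) (s : σ) : (⨅ s, f s) ≤ f s :=
  ciInf_le (Set.Finite.bddBelow (Set.finite_range f)) s

lemma cinf_attain15 (f : σ → ℝ) : ∃ s, (⨅ i, f i) = f s := by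
  obtain ⟨s, hs⟩ := Finite.exists_min f
  exact ⟨s, le_antisymm (cinf_le15 f s) (le_ciInf hs)⟩

lemma shiftPt_eq_add (p : Pt σ) (a : ℝ) : shiftPt p a = p + a • eVec σ := by
  refine Prod.ext ?_ ?_ <;> funext s <;> simp [shiftPt, eVec] <;> ring

lemma shiftPt_comp (p : Pt σ) (a b : ℝ) : shiftPt (shiftPt p a) b = shiftPt p (a + b) := by
  refine Prod.ext ?_ ?_ <;> funext s <;> simp [shiftPt] <;> ring

lemma shiftPt_zero (p : Pt σ) : shiftPt p 0 = p := by
  refine Prod.ext ?_ ?_ <;> funext s <;> simp [shiftPt]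

/-- if `p` is already minimal, `red μ p = p` -/
lemma red_eq_self {μ : σ → σ → ℝ} {p : Pt σ} (hp : p ∈ QQ μ) : red μ p = p :=
  hp.2 (red μ p) (red_mem_QQ hp.1).1 (red_le hp.1)

end AuxStmt15

section CycAux
variable {V : Type*}

lemma cycLen_two (d : V → V → ℝ) (a b : V) :
    cycLen d 1 ![a, b] = d a b + d b a := by
  unfold cycLen
  rw [Fin.sum_univ_two]
  simp [show (2 : Fin 2) = 0 from rfl]

lemma cycLen_three (d : V → V → ℝ) (a b c : V) :
    cycLen d 2 ![a, b, c] = d a b + d b c + d c a := by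
  unfold cycLen
  rw [Fin.sum_univ_three]
  simp [show (3 : Fin 3) = 0 from rfl]

lemma sum_cyc {m : ℕ} (x : Fin (m+1) → V) (f : V → ℝ) :
    ∑ i, f (x (i+1)) = ∑ i, f (x i) :=
  Fintype.sum_equiv (Equiv.addRight 1) _ _ (fun i => rfl)

lemma cycLen_potential {d1 d2 : V → V → ℝ} {f : V → ℝ}
    (h : ∀ x y, d2 x y = d1 x y + f y - f x) (m : ℕ) (x : Fin (m+1) → V) :
    cycLen d2 m x = cycLen d1 m x := by
  unfold cycLen
  simp only [h]
  have h1 : ∀ i : Fin (m+1), d1 (x i) (x (i+1)) + f (x (i+1)) - f (x i)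
      = d1 (x i) (x (i+1)) + (f (x (i+1)) - f (x i)) := fun i => by ring
  simp only [h1]
  rw [Finset.sum_add_distrib, Finset.sum_sub_distrib, sum_cyc]
  ring

lemma cycLen_potential_le {d1 d2 : V → V → ℝ} {f : V → ℝ}
    (h : ∀ x y, d2 x y ≤ d1 x y + f y - f x) (m : ℕ) (x : Fin (m+1) → V) :
    cycLen d2 m x ≤ cycLen d1 m x := by
  unfold cycLen
  calc ∑ i, d2 (x i) (x (i+1)) ≤ ∑ i, (d1 (x i) (x (i+1)) + (f (x (i+1)) - f (x i))) := by
        refine Finset.sum_le_sum fun i _ => ?_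
        have := h (x i) (x (i+1)); linarith
    _ = ∑ i, d1 (x i) (x (i+1)) := by
        rw [Finset.sum_add_distrib, Finset.sum_sub_distrib, sum_cyc]; ring

lemma cycLen_mono {d1 d2 : V → V → ℝ} (h : ∀ x y, d2 x y ≤ d1 x y) (m : ℕ)
    (x : Fin (m+1) → V) : cycLen d2 m x ≤ cycLen d1 m x :=
  Finset.sum_le_sum fun i _ => h _ _

end CycAux


section Forward
set_option linter.unusedSectionVars false
set_option maxHeartbeats 1000000
variable {V : Type*} {S : Set V} [Fintype ↥S]

lemma forward15 (hS : S.Nonempty) (μ : ↥S → ↥S → ℝ) (hμ : DirMetric μ)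
    (d : V → V → ℝ) (hd : DirMetric d)
    (d' : V → V → ℝ) (hT : IsCycTightExt S μ d')
    (hcong : ∀ (m : ℕ) (x : Fin (m + 1) → V), cycLen d m x = cycLen d' m x) :
    ∃ ρ : V → Pt ↥S, (∀ x, ρ x ∈ QQ μ) ∧ (∀ x y, Dinf (ρ x) (ρ y) = d x y) ∧
      (∀ s : ↥S, ∃ α : ℝ, ρ ↑s - muVec μ s = α • eVec ↥S) ∧
      BalancedSet (Set.range ρ) := by
  classical
  have hne : Nonempty ↥S := hS.to_subtype
  obtain ⟨hm', hext, htight⟩ := hT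
  set κ : V → Pt ↥S := fun x => (fun s => d' ↑s x, fun t => d' x ↑t) with hκ
  have hκPi : ∀ x, κ x ∈ PiP μ := by
    intro x s t
    have h1 := hm'.2 ↑s x ↑t
    have h2 := hext s t
    show μ s t ≤ d' ↑s x + d' x ↑t
    linarith
  set q : V → Pt ↥S := fun x => red μ (κ x) with hq
  have hqQ : ∀ x, q x ∈ QQ μ := fun x => red_mem_QQ (hκPi x)
  have hqS : ∀ s : ↥S, q ↑s = muVec μ s := by
    intro s
    have h1 : κ ↑s = muVec μ s := by
      refine Prod.ext ?_ ?_ <;> funext u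
      · exact hext u s
      · exact hext s u
    simp only [hq, h1]
    exact red_eq_self (muVec_mem_QQ hμ s)
  -- pointwise upper bound
  have hδle : ∀ x y, delC (q x) (q y) ≤ d' x y := by
    intro x y
    rw [delC_eq_delR (hqQ x) (hqQ y)]
    refine delR_le fun t => ?_
    obtain ⟨s, hs⟩ := csup_attain15 (fun s => μ s t - (κ x).1 s)
    have h1 : (q x).2 t = μ s t - d' ↑s x := by
      simp only [hq, red, redR]
      rw [hs]
    have h2 : μ s t - d' ↑s y ≤ (q y).2 t := le_csup15 (fun s => μ s t - (κ y).1 s) s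
    have h3 := hm'.2 ↑s x y
    linarith
  -- the squeezed extension
  have hEq : ∀ x y, d' x y = max (delC (q x) (q y)) 0 := by
    have htld_le : ∀ x y, max (delC (q x) (q y)) 0 ≤ d' x y :=
      fun x y => max_le (hδle x y) (hm'.1.1 x y)
    have hmet : DirMetric (fun x y => max (delC (q x) (q y)) 0) := by
      refine ⟨⟨fun u v => le_max_right _ _, fun u => by simp [delC_self]⟩, fun u v w => ?_⟩
      have t := delC_triangle (q u) (q v) (q w)
      have l1 : delC (q u) (q v) ≤ max (delC (q u) (q v)) 0 := le_max_left _ _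
      have l2 : delC (q v) (q w) ≤ max (delC (q v) (q w)) 0 := le_max_left _ _
      have n1 : (0:ℝ) ≤ max (delC (q u) (q v)) 0 := le_max_right _ _
      have n2 : (0:ℝ) ≤ max (delC (q v) (q w)) 0 := le_max_right _ _
      exact max_le (by linarith) (by linarith)
    have hext2 : ∀ s t : ↥S, max (delC (q ↑s) (q ↑t)) 0 = μ s t := by
      intro s t
      rw [hqS, hqS, delC_muVec hμ]
      exact max_eq_left (hμ.1.1 s t)
    have hcyceq : ∀ (m : ℕ) (x : Fin (m+1) → V),
        cycLen (fun x y => max (delC (q x) (q y)) 0) m x = cycLen d' m x := by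
      intro m x
      refine le_antisymm (cycLen_mono htld_le m x) (not_lt.1 fun hlt => ?_)
      exact htight ⟨_, hmet, hext2, cycLen_mono htld_le, m, x, hlt⟩
    intro x y
    have h2 := hcyceq 1 ![x, y]
    rw [cycLen_two, cycLen_two] at h2
    have u1 := htld_le x y
    have u2 := htld_le y x
    linarith
  -- nonnegativity of delC on the range of q
  have h50 : ∀ x y, 0 ≤ delC (q x) (q y) := by
    by_contra hcon
    push_neg at hcon
    obtain ⟨x0, y0, hneg⟩ := hcon
    set ε : ℝ := -(delC (q x0) (q y0)) with hεdef
    have hε : 0 < ε := by simp only [hεdef]; linarith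
    have hxy0 : d' x0 y0 = 0 := by
      rw [hEq]; exact max_eq_right (le_of_lt hneg)
    have hyx : ε ≤ delC (q y0) (q x0) := by
      have h0 := delC_self (q x0)
      have := delC_triangle (q x0) (q y0) (q x0)
      simp only [hεdef]; linarith
    have hd'yx : ε ≤ d' y0 x0 := by
      rw [hEq]; exact le_trans hyx (le_max_left _ _)
    have hdich : (∀ s : ↥S, ε/2 ≤ d' y0 ↑s) ∨ (∀ s : ↥S, ε/2 ≤ d' ↑s x0) := by
      by_contra hno
      push_neg at hno
      obtain ⟨⟨s1, h1⟩, ⟨s2, h2⟩⟩ := hno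
      have hμ0 : 0 ≤ μ s2 s1 := hμ.1.1 s2 s1
      have e1 : μ s2 s1 = delC (q ↑s2) (q ↑s1) := by rw [hqS, hqS, delC_muVec hμ]
      have t1 := delC_triangle (q ↑s2) (q x0) (q ↑s1)
      have t2 := delC_triangle (q x0) (q y0) (q ↑s1)
      have b1 : delC (q ↑s2) (q x0) ≤ d' ↑s2 x0 := hδle _ _
      have b2 : delC (q y0) (q ↑s1) ≤ d' y0 ↑s1 := hδle _ _
      have hnn : delC (q x0) (q y0) = -ε := by simp [hεdef]
      linarith
    have key : ∀ τ : V → ℝ, (∀ u v, τ u - τ v ≤ d' u v) → (∀ s : ↥S, τ ↑s = 0) →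
        (τ y0 - τ x0 = ε/2) → False := by
      intro τ hLip hτS hθ
      set d3 : V → V → ℝ := fun u v => max (delC (q u) (q v) + (τ v - τ u)) 0 with hd3
      have hmet3 : DirMetric d3 := by
        refine ⟨⟨fun u v => le_max_right _ _, fun u => by simp [hd3, delC_self]⟩,
          fun u v w => ?_⟩
        have t := delC_triangle (q u) (q v) (q w)
        have l1 : delC (q u) (q v) + (τ v - τ u) ≤ d3 u v := le_max_left _ _
        have l2 : delC (q v) (q w) + (τ w - τ v) ≤ d3 v w := le_max_left _ _
        have n1 : (0:ℝ) ≤ d3 u v := le_max_right _ _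
        have n2 : (0:ℝ) ≤ d3 v w := le_max_right _ _
        simp only [hd3]
        exact max_le (by linarith) (by linarith)
      have hext3 : ∀ s t : ↥S, d3 ↑s ↑t = μ s t := by
        intro s t
        simp only [hd3, hτS]
        rw [hqS, hqS, delC_muVec hμ]
        simpa using max_eq_left (hμ.1.1 s t)
      have hper : ∀ u v, d3 u v ≤ d' u v + τ v - τ u := by
        intro u v
        have h1 : delC (q u) (q v) ≤ d' u v := hδle u v
        have h2 := hLip u v
        simp only [hd3]
        exact max_le (by linarith) (by linarith)
      have hall : ∀ (m : ℕ) (x : Fin (m+1) → V), cycLen d3 m x ≤ cycLen d' m x :=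
        cycLen_potential_le hper
      have hstrict : cycLen d3 1 ![x0, y0] < cycLen d' 1 ![x0, y0] := by
        rw [cycLen_two, cycLen_two]
        have hnn : delC (q x0) (q y0) = -ε := by simp [hεdef]
        have e1 : d3 x0 y0 = 0 := by
          simp only [hd3]
          exact max_eq_right (by linarith)
        have e2 : d3 y0 x0 = delC (q y0) (q x0) - ε/2 := by
          simp only [hd3]
          rw [max_eq_left (by linarith)]
          linarith
        have e3 : d' y0 x0 = delC (q y0) (q x0) := by
          rw [hEq]; exact max_eq_left (by linarith)
        rw [e1, e2, e3, hxy0]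
        linarith
      exact htight ⟨d3, hmet3, hext3, hall, 1, ![x0, y0], hstrict⟩
    rcases hdich with hA | hB
    · refine key (fun y => max (ε/2 - d' y0 y) 0) ?_ ?_ ?_
      · intro u v
        show max (ε/2 - d' y0 u) 0 - max (ε/2 - d' y0 v) 0 ≤ d' u v
        have htr := hm'.2 y0 u v
        have l1 : ε/2 - d' y0 v ≤ max (ε/2 - d' y0 v) 0 := le_max_left _ _
        have l0 : (0:ℝ) ≤ max (ε/2 - d' y0 v) 0 := le_max_right _ _
        have hnn := hm'.1.1 u v
        have : max (ε/2 - d' y0 u) 0 ≤ d' u v + max (ε/2 - d' y0 v) 0 :=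
          max_le (by linarith) (by linarith)
        linarith
      · intro s
        show max (ε/2 - d' y0 ↑s) 0 = 0
        exact max_eq_right (by linarith [hA s])
      · show max (ε/2 - d' y0 y0) 0 - max (ε/2 - d' y0 x0) 0 = ε/2
        have e1 : max (ε/2 - d' y0 y0) 0 = ε/2 := by
          rw [hm'.1.2 y0, sub_zero]
          exact max_eq_left (by linarith)
        have e2 : max (ε/2 - d' y0 x0) 0 = 0 := max_eq_right (by linarith)
        rw [e1, e2]
        ring
    · refine key (fun y => -max (ε/2 - d' y x0) 0) ?_ ?_ ?_
      · intro u v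
        show -max (ε/2 - d' u x0) 0 - -max (ε/2 - d' v x0) 0 ≤ d' u v
        have htr := hm'.2 u v x0
        have l1 : ε/2 - d' u x0 ≤ max (ε/2 - d' u x0) 0 := le_max_left _ _
        have l0 : (0:ℝ) ≤ max (ε/2 - d' u x0) 0 := le_max_right _ _
        have hnn := hm'.1.1 u v
        have : max (ε/2 - d' v x0) 0 ≤ d' u v + max (ε/2 - d' u x0) 0 :=
          max_le (by linarith) (by linarith)
        linarith
      · intro s
        show -max (ε/2 - d' ↑s x0) 0 = 0
        rw [max_eq_right (by linarith [hB s])]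
        ring
      · show -max (ε/2 - d' y0 x0) 0 - -max (ε/2 - d' x0 x0) 0 = ε/2
        have e1 : max (ε/2 - d' y0 x0) 0 = 0 := max_eq_right (by linarith)
        have e2 : max (ε/2 - d' x0 x0) 0 = ε/2 := by
          rw [hm'.1.2 x0, sub_zero]
          exact max_eq_left (by linarith)
        rw [e1, e2]
        ring
  have hd'' : ∀ x y, d' x y = delC (q x) (q y) := fun x y => by
    rw [hEq]; exact max_eq_left (h50 x y)
  -- congruence potential
  set s0 : ↥S := Classical.arbitrary ↥S with hs0
  set π : V → ℝ := fun y => d ↑s0 y - d' ↑s0 y with hπ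
  have hpot : ∀ x y, d x y = d' x y + π y - π x := by
    have h2c : ∀ a b : V, d a b + d b a = d' a b + d' b a := by
      intro a b
      have := hcong 1 ![a, b]
      rwa [cycLen_two, cycLen_two] at this
    have h3c : ∀ a b c : V, d a b + d b c + d c a = d' a b + d' b c + d' c a := by
      intro a b c
      have := hcong 2 ![a, b, c]
      rwa [cycLen_three, cycLen_three] at this
    intro x y
    have e1 := h3c ↑s0 x y
    have e2 := h2c ↑s0 y
    have e3 := h2c ↑s0 x
    simp only [hπ]
    linarith
  set ρ : V → Pt ↥S := fun x => shiftPt (q x) (π x) with hρ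
  have hρQ : ∀ x, ρ x ∈ QQ μ := fun x => shiftPt_mem_QQ (hqQ x) _
  have hρdel : ∀ x y, delC (ρ x) (ρ y) = d x y := by
    intro x y
    simp only [hρ]
    rw [delC_shiftPt, ← hd'', hpot x y]
    ring
  refine ⟨ρ, hρQ, ?_, ?_, ?_, ?_⟩
  · intro x y
    rw [Dinf_eq_QQ (hρQ x) (hρQ y), hρdel]
    exact max_eq_left (hd.1.1 x y)
  · intro s
    refine ⟨π ↑s, ?_⟩
    simp only [hρ, hqS s]
    exact shiftPt_sub _ _
  · rintro ⟨p, ⟨x, rfl⟩, p', ⟨y, rfl⟩, hlt⟩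
    obtain ⟨u, hu⟩ := csup_attain15 (fun s => (ρ x).1 s - (ρ y).1 s)
    have h1 : delC (ρ y) (ρ x) < 0 := by
      rw [delC, hu]
      have := hlt u
      linarith
    rw [hρdel] at h1
    exact absurd h1 (not_lt.2 (hd.1.1 y x))
  · rintro ⟨p, ⟨x, rfl⟩, p', ⟨y, rfl⟩, hlt⟩
    obtain ⟨u, hu⟩ := csup_attain15 (fun s => (ρ x).2 s - (ρ y).2 s)
    have h1 : delR (ρ x) (ρ y) < 0 := by
      rw [delR, hu]
      have := hlt u
      linarith
    rw [← delC_eq_delR (hρQ x) (hρQ y), hρdel] at h1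
    exact absurd h1 (not_lt.2 (hd.1.1 x y))
end Forward


section Backward
set_option linter.unusedSectionVars false
set_option maxHeartbeats 1000000
variable {V : Type*} {S : Set V} [Fintype ↥S]

lemma backward15 (hS : S.Nonempty) (μ : ↥S → ↥S → ℝ) (hμ : DirMetric μ)
    (d : V → V → ℝ) (hd : DirMetric d)
    (ρ : V → Pt ↥S) (hQ : ∀ x, ρ x ∈ QQ μ)
    (hIso : ∀ x y, Dinf (ρ x) (ρ y) = d x y)
    (hAl : ∀ s : ↥S, ∃ α : ℝ, ρ ↑s - muVec μ s = α • eVec ↥S)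
    (hBal : BalancedSet (Set.range ρ)) :
    ∃ d' : V → V → ℝ, IsCycTightExt S μ d' ∧
      ∀ (m : ℕ) (x : Fin (m + 1) → V), cycLen d m x = cycLen d' m x := by
  classical
  haveI hne : Nonempty ↥S := hS.to_subtype
  have s00 : ↥S := Classical.arbitrary ↥S
  have hδ0 : ∀ x y, 0 ≤ delC (ρ x) (ρ y) := by
    intro x y
    by_contra hneg
    push_neg at hneg
    exact hBal.1 ⟨ρ y, ⟨y, rfl⟩, ρ x, ⟨x, rfl⟩,
      fun s => by have := le_delC (ρ x) (ρ y) s; linarith⟩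
  have hdEq : ∀ x y, d x y = delC (ρ x) (ρ y) := by
    intro x y
    rw [← hIso x y, Dinf_eq_QQ (hQ x) (hQ y)]
    exact max_eq_left (hδ0 x y)
  choose α hα0 using hAl
  have hα : ∀ s : ↥S, ρ ↑s = shiftPt (muVec μ s) (α s) := by
    intro s
    rw [shiftPt_eq_add]
    have := hα0 s
    linear_combination (norm := skip) this
    abel
  have hdst : ∀ s t : ↥S, d ↑s ↑t = μ s t + (α t - α s) := by
    intro s t
    rw [hdEq, hα s, hα t, delC_shiftPt, delC_muVec hμ]
  set π : V → ℝ := fun x => ⨅ s : ↥S, (d x ↑s - α s) with hπ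
  have hπLip : ∀ x y, π x - π y ≤ d x y := by
    intro x y
    obtain ⟨t, ht⟩ := cinf_attain15 (fun s : ↥S => d y ↑s - α s)
    have h1 : π x ≤ d x ↑t - α t := cinf_le15 (fun s : ↥S => d x ↑s - α s) t
    have h2 := hd.2 x y ↑t
    have h3 : π y = d y ↑t - α t := ht
    linarith
  have hπs : ∀ s : ↥S, π ↑s = -(α s) := by
    intro s
    refine le_antisymm ?_ (le_ciInf fun t => ?_)
    · have h1 : π ↑s ≤ d ↑s ↑s - α s := cinf_le15 (fun t : ↥S => d ↑s ↑t - α t) s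
      rw [hd.1.2 ↑s] at h1
      linarith
    · rw [hdst s t]
      have := hμ.1.1 s t
      linarith
  set d2 : V → V → ℝ := fun x y => d x y + π y - π x with hd2
  have hm2 : DirMetric d2 := by
    refine ⟨⟨fun x y => ?_, fun x => ?_⟩, fun x y z => ?_⟩
    · have := hπLip x y; simp only [hd2]; linarith
    · simp only [hd2, hd.1.2 x]; ring
    · have := hd.2 x y z; simp only [hd2]; linarith
  have hext2 : ∀ s t : ↥S, d2 ↑s ↑t = μ s t := by
    intro s t
    simp only [hd2, hdst s t, hπs]
    ring
  set ρ' : V → Pt ↥S := fun x => shiftPt (ρ x) (π x) with hρ'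
  have hQ' : ∀ x, ρ' x ∈ QQ μ := fun x => shiftPt_mem_QQ (hQ x) _
  have hδ2 : ∀ x y, delC (ρ' x) (ρ' y) = d2 x y := by
    intro x y
    simp only [hρ', hd2]
    rw [delC_shiftPt, ← hdEq]
    ring
  have hρ'S : ∀ s : ↥S, ρ' ↑s = muVec μ s := by
    intro s
    simp only [hρ']
    rw [hα s, shiftPt_comp, hπs]
    rw [add_neg_cancel, shiftPt_zero]
  have hstar_c : ∀ (s : ↥S) (y : V), d2 ↑s y = (ρ' y).1 s := by
    intro s y
    have h := hδ2 ↑s y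
    rw [hρ'S s] at h
    rw [← h]
    refine le_antisymm ?_ ?_
    · rw [delC_eq_delR (muVec_mem_QQ hμ s) (hQ' y)]
      refine delR_le fun t => ?_
      have := (hQ' y).1 s t
      show μ s t - (ρ' y).2 t ≤ _
      linarith
    · have h2 := le_delC (muVec μ s) (ρ' y) s
      have h3 : (muVec μ s).1 s = 0 := hμ.1.2 s
      rw [h3] at h2
      linarith
  have hstar_r : ∀ (x : V) (s : ↥S), d2 x ↑s = (ρ' x).2 s := by
    intro x s
    have h := hδ2 x ↑s
    rw [hρ'S s] at h
    rw [← h]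
    refine le_antisymm ?_ ?_
    · refine delC_le fun t => ?_
      have := (hQ' x).1 t s
      show μ t s - (ρ' x).1 t ≤ _
      linarith
    · rw [delC_eq_delR (hQ' x) (muVec_mem_QQ hμ s)]
      have h2 := le_delR (ρ' x) (muVec μ s) s
      have h3 : (muVec μ s).2 s = 0 := hμ.1.2 s
      rw [h3] at h2
      linarith
  refine ⟨d2, ⟨hm2, hext2, ?_⟩, fun m x =>
    (cycLen_potential (f := π) (fun x y => rfl) m x).symm⟩
  rintro ⟨d3, hm3, hext3, hle3, m0, xc, hlt3⟩
  have hβ : ∀ x, ∃ β : ℝ, (∀ s : ↥S, d3 ↑s x = (ρ' x).1 s + β) ∧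
      (∀ s : ↥S, d3 x ↑s = (ρ' x).2 s - β) := by
    intro x
    refine dominated_eq_shift (hQ' x) ?_ ?_
    · intro s t
      have h1 := hm3.2 ↑s x ↑t
      have h2 := hext3 s t
      show μ s t ≤ d3 ↑s x + d3 x ↑t
      linarith
    · intro s t
      have hcy := hle3 2 ![↑s, x, ↑t]
      rw [cycLen_three, cycLen_three] at hcy
      have e1 : d3 ↑t ↑s = μ t s := hext3 t s
      have e2 : d2 ↑t ↑s = μ t s := hext2 t s
      have e3 : d2 ↑s x = (ρ' x).1 s := hstar_c s x
      have e4 : d2 x ↑t = (ρ' x).2 t := hstar_r x t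
      linarith
  choose β hβ1 hβ2 using hβ
  have h3eq : ∀ x y, d3 x y = d2 x y + β y - β x := by
    intro x y
    refine le_antisymm ?_ ?_
    · have hcy := hle3 2 ![x, y, ↑s00]
      rw [cycLen_three, cycLen_three] at hcy
      have e1 := hβ2 y s00
      have e2 := hβ1 x s00
      have e3 := hstar_r y s00
      have e4 := hstar_c s00 x
      linarith
    · obtain ⟨u, hu⟩ := csup_attain15 (fun s => (ρ' y).1 s - (ρ' x).1 s)
      have h1 : d2 x y = (ρ' y).1 u - (ρ' x).1 u := by
        rw [← hδ2, delC, hu]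
      have h2 := hm3.2 ↑u x y
      have e1 := hβ1 y u
      have e2 := hβ1 x u
      linarith
  have heq := cycLen_potential h3eq m0 xc
  rw [heq] at hlt3
  exact lt_irrefl _ hlt3

end Backward


/-- Proposition 2.13 (2).  A directed metric `d` on `V` is congruent to some
cyclically tight extension of `μ` iff there is an isometric embedding
`ρ : V → Q_μ` with `ρ(s) - μ_s ∈ ℝe` for `s ∈ S` and `ρ(V)` balanced. -/
theorem stmt15 {V : Type*} (S : Set V) [Fintype S] (hS : S.Nonempty)
    (μ : S → S → ℝ) (hμ : DirMetric μ)
    (d : V → V → ℝ) (hd : DirMetric d) :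
    (∃ d' : V → V → ℝ, IsCycTightExt S μ d' ∧
      ∀ (m : ℕ) (x : Fin (m + 1) → V), cycLen d m x = cycLen d' m x) ↔
    (∃ ρ : V → Pt S, (∀ x, ρ x ∈ QQ μ) ∧
      (∀ x y, Dinf (ρ x) (ρ y) = d x y) ∧
      (∀ s : S, ∃ α : ℝ, ρ s - muVec μ s = α • eVec S) ∧
      BalancedSet (Set.range ρ)) := by
  constructor
  · rintro ⟨d', hT, hcong⟩
    exact forward15 hS μ hμ d hd d' hT hcong
  · rintro ⟨ρ, hQ, hIso, hAl, hBal⟩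
    exact backward15 hS μ hμ d hd ρ hQ hIso hAl hBal
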